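/- arXiv:1205.1100 — 3 statements merged into one kernel-verified Lean document; each statement's English description precedes it below -/
import Mathlib

section
/- Let n ≥ 1, let C ⊆ ℝ^n be a nonempty open convex cone (an open convex set stable under multiplication by positive real numbers), let μ_1, …, μ_N ∈ ℝ^n be such that μ_j − μ_l ∉ 2πℤ^n for all j ≠ l, and let p_1, …, p_N : ℝ^n → ℂ be polynomial functions (polynomials in the n coordinates with complex coefficients). If Σ_{j=1}^N exp(i⟨μ_j, T⟩) · p_j(T) = 0 for every T ∈ ℤ^n ∩ C, where ⟨·,·⟩ is the standard inner product on ℝ^n, then p_j = 0 for every j. -/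
/-!
Write the function as `F = ∑ j, χ j · p j` with characters `χ j` of `ℤ^n`. The lattice points of a
nonempty open cone contain boxes of every size, and the operators `F ↦ F (· + eᵢ) - c • F` preserve
vanishing on arbitrarily large boxes. On a single term such an operator acts through the
polynomials: `χ · p ↦ χ · (z • Eᵢ p - c • p)`, where `Eᵢ` substitutes `Xᵢ + 1` for `Xᵢ` and
`z = χ eᵢ`. Since `Eᵢ - 1` is locally nilpotent, a power of this operator kills the term if `c = z`,
and it is injective if `c ≠ z`. Killing the frequencies one at a time reduces the claim to a single
term `χ · p`, and a polynomial vanishing on a box larger than its degree is zero (combinatorial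
Nullstellensatz).
-/

open MvPolynomial Finset

section LocallyNilpotent

theorem Module.End.pow_apply_eq_zero_of_le {R M : Type*} [Semiring R] [AddCommMonoid M]
    [Module R M] {f : Module.End R M} {a b : ℕ} {x : M} (hab : a ≤ b) (hx : (f ^ a) x = 0) :
    (f ^ b) x = 0 := by
  rw [← Nat.sub_add_cancel hab, pow_add, Module.End.mul_apply, hx, map_zero]

theorem Module.End.eq_zero_of_smul_eq_smul_apply {K V : Type*} [Field K] [AddCommGroup V]
    [Module K V] {f : Module.End K V} {D : ℕ} {x : V} {u w : K} (hu : u ≠ 0)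
    (hD : (f ^ D) x = 0) (h : u • x = w • f x) : x = 0 := by
  have key : ∀ k : ℕ, u ^ k • x = w ^ k • (f ^ k) x := by
    intro k
    induction k with
    | zero => simp
    | succ k ih =>
      calc u ^ (k + 1) • x = u • (u ^ k • x) := by rw [pow_succ', mul_smul]
        _ = w ^ k • (f ^ k) (u • x) := by rw [ih, map_smul, smul_comm]
        _ = w ^ (k + 1) • (f ^ (k + 1)) x := by
          rw [h, map_smul, smul_smul, ← pow_succ, pow_succ f, Module.End.mul_apply]
  have hzero := key D
  rw [hD, smul_zero, smul_eq_zero] at hzero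
  exact hzero.resolve_left (pow_ne_zero _ hu)

theorem AlgHom.pow_sub_one_apply_mul_eq_zero {R A : Type*} [CommSemiring R] [CommRing A]
    [Algebra R A] (f : A →ₐ[R] A) {a b : ℕ} {x y : A}
    (hx : ((f.toLinearMap - 1) ^ a) x = 0) (hy : ((f.toLinearMap - 1) ^ b) y = 0) :
    ((f.toLinearMap - 1) ^ (a + b)) (x * y) = 0 := by
  set Δ : Module.End R A := f.toLinearMap - 1
  have hΔ_mul : ∀ u v, Δ (u * v) = Δ u * f v + u * Δ v := fun u v => by
    simp only [Δ, LinearMap.sub_apply, AlgHom.toLinearMap_apply, Module.End.one_apply, map_mul]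
    ring
  have hΔ_comm : ∀ k u, (Δ ^ k) (f u) = f ((Δ ^ k) u) := fun k u =>
    (LinearMap.congr_fun
      (((Commute.refl f.toLinearMap).sub_right (Commute.one_right _)).pow_right k).eq u).symm
  induction a generalizing x b y with
  | zero => rw [pow_zero, Module.End.one_apply] at hx; simp [hx]
  | succ a iha =>
    induction b generalizing y with
    | zero => rw [pow_zero, Module.End.one_apply] at hy; simp [hy]
    | succ b ihb =>
      have hΔx : (Δ ^ a) (Δ x) = 0 := by rwa [← Module.End.mul_apply, ← pow_succ]
      have hfy : (Δ ^ (b + 1)) (f y) = 0 := by rw [hΔ_comm, hy, map_zero]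
      have hΔy : (Δ ^ b) (Δ y) = 0 := by rwa [← Module.End.mul_apply, ← pow_succ]
      rw [show a + 1 + (b + 1) = a + (b + 1) + 1 by ring, pow_succ, Module.End.mul_apply, hΔ_mul,
        map_add, iha hΔx hfy, show a + (b + 1) = a + 1 + b by ring, ihb hΔy, add_zero]

end LocallyNilpotent

namespace MvPolynomial

variable {σ K : Type*} [DecidableEq σ]

noncomputable def shiftVar [CommSemiring K] (i : σ) : MvPolynomial σ K →ₐ[K] MvPolynomial σ K :=
  bind₁ (X + Pi.single i 1)

theorem eval_shiftVar [CommSemiring K] (i : σ) (x : σ → K) (q : MvPolynomial σ K) :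
    eval x (shiftVar i q) = eval (x + Pi.single i 1) q := by
  rw [shiftVar, eval, eval₂Hom_bind₁]
  congr 2
  funext k
  rcases eq_or_ne k i with rfl | hk <;> simp [*]

theorem exists_pow_shiftVar_sub_one_apply_eq_zero [CommRing K] (i : σ) (p : MvPolynomial σ K) :
    ∃ D, (((shiftVar i).toLinearMap - 1 : Module.End K (MvPolynomial σ K)) ^ D) p = 0 := by
  induction p using MvPolynomial.induction_on with
  | C a => exact ⟨1, by simp [shiftVar]⟩
  | add p q hp hq =>
    obtain ⟨D, hD⟩ := hp
    obtain ⟨E, hE⟩ := hq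
    exact ⟨max D E, by rw [map_add, Module.End.pow_apply_eq_zero_of_le (le_max_left D E) hD,
      Module.End.pow_apply_eq_zero_of_le (le_max_right D E) hE, add_zero]⟩
  | mul_X p k hp =>
    obtain ⟨D, hD⟩ := hp
    refine ⟨D + 2, AlgHom.pow_sub_one_apply_mul_eq_zero _ hD ?_⟩
    rcases eq_or_ne k i with rfl | hk <;> simp [pow_two, shiftVar, *]

noncomputable def twistedDiff [CommRing K] (i : σ) (z c : K) : Module.End K (MvPolynomial σ K) :=
  z • (shiftVar i).toLinearMap - c • 1

variable [Field K]

theorem exists_pow_twistedDiff_self_apply_eq_zero (i : σ) (z : K) (p : MvPolynomial σ K) :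
    ∃ D, (twistedDiff i z z ^ D) p = 0 := by
  obtain ⟨D, hD⟩ := exists_pow_shiftVar_sub_one_apply_eq_zero i p
  have hself : twistedDiff i z z = z • ((shiftVar i).toLinearMap - 1) := by
    rw [twistedDiff, smul_sub]
  exact ⟨D, by rw [hself, smul_pow, LinearMap.smul_apply, hD, smul_zero]⟩

theorem twistedDiff_injective (i : σ) {z c : K} (hzc : z ≠ c) :
    Function.Injective (twistedDiff i z c) := by
  rw [injective_iff_map_eq_zero]
  intro q hq
  obtain ⟨D, hD⟩ := exists_pow_shiftVar_sub_one_apply_eq_zero i q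
  refine Module.End.eq_zero_of_smul_eq_smul_apply (sub_ne_zero.2 hzc.symm) hD (w := z) ?_
  simp only [twistedDiff, LinearMap.sub_apply, LinearMap.smul_apply, AlgHom.toLinearMap_apply,
    Module.End.one_apply] at hq ⊢
  linear_combination (norm := module) -hq

end MvPolynomial

section LatticeFunctions

variable {σ K : Type*}

def VanishesOnLargeBoxes {M : Type*} [Zero M] (F : (σ → ℤ) → M) : Prop :=
  ∀ k : ℕ, ∃ a : σ → ℤ, ∀ m ∈ Set.Icc a (a + k), F m = 0

theorem Icc_add_natCast_subset_Icc_add_succ (a : σ → ℤ) (k : ℕ) :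
    Set.Icc a (a + k) ⊆ Set.Icc a (a + (k + 1 : ℕ)) :=
  Set.Icc_subset_Icc_right fun j => by simp

theorem MvPolynomial.eq_zero_of_vanishesOnLargeBoxes [Finite σ] [CommRing K] [IsDomain K]
    [CharZero K] (q : MvPolynomial σ K)
    (h : VanishesOnLargeBoxes fun m => eval (Int.cast ∘ m) q) : q = 0 := by
  classical
  obtain ⟨a, ha⟩ := h q.totalDegree
  refine eq_zero_of_eval_zero_at_prod_finset q
    (fun i => (Icc (a i) (a i + q.totalDegree)).image Int.cast) (fun i => ?_) (fun x hx => ?_)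
  · rw [card_image_of_injective _ Int.cast_injective, Int.card_Icc]
    have := degreeOf_le_totalDegree q i
    omega
  · choose m hm hmx using fun i => mem_image.1 (hx i)
    obtain rfl : Int.cast ∘ m = x := by ext i; exact hmx i
    exact ha m ⟨fun i => (mem_Icc.1 (hm i)).1, fun i => by simpa using (mem_Icc.1 (hm i)).2⟩

variable [CommRing K]

noncomputable def polyExpTerm (χ : AddChar (σ → ℤ) K) (q : MvPolynomial σ K) : (σ → ℤ) → K :=
  fun m => χ m * eval (Int.cast ∘ m) q

@[simp]
theorem polyExpTerm_zero (χ : AddChar (σ → ℤ) K) : polyExpTerm χ 0 = 0 := by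
  funext m
  simp [polyExpTerm]

theorem eq_zero_of_vanishesOnLargeBoxes_polyExpTerm [Finite σ] [IsDomain K] [CharZero K]
    {χ : AddChar (σ → ℤ) K} {q : MvPolynomial σ K} (h : VanishesOnLargeBoxes (polyExpTerm χ q)) :
    q = 0 := by
  refine eq_zero_of_vanishesOnLargeBoxes q fun k => ?_
  obtain ⟨a, ha⟩ := h k
  exact ⟨a, fun m hm => (mul_eq_zero.1 (ha m hm)).resolve_left (χ.val_isUnit m).ne_zero⟩

variable [DecidableEq σ]

theorem add_single_mem_Icc {a m : σ → ℤ} {k : ℕ} (i : σ) (hm : m ∈ Set.Icc a (a + k)) :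
    m + Pi.single i 1 ∈ Set.Icc a (a + (k + 1 : ℕ)) := by
  simp only [Set.mem_Icc, Pi.le_def, Pi.add_apply, Pi.natCast_apply] at hm ⊢
  refine ⟨fun j => ?_, fun j => ?_⟩ <;> rcases eq_or_ne j i with rfl | hj <;>
    simp [*] <;> linarith [hm.1 j, hm.2 j]

noncomputable def shiftSub (i : σ) (c : K) : Module.End K ((σ → ℤ) → K) :=
  LinearMap.funLeft K K (· + Pi.single i 1) - c • 1

theorem shiftSub_apply (i : σ) (c : K) (F : (σ → ℤ) → K) (m : σ → ℤ) :
    shiftSub i c F m = F (m + Pi.single i 1) - c * F m :=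
  rfl

theorem VanishesOnLargeBoxes.map_shiftSub {F : (σ → ℤ) → K} (h : VanishesOnLargeBoxes F)
    (i : σ) (c : K) : VanishesOnLargeBoxes (shiftSub i c F) := by
  intro k
  obtain ⟨a, ha⟩ := h (k + 1)
  refine ⟨a, fun m hm => ?_⟩
  rw [shiftSub_apply, ha _ (add_single_mem_Icc i hm),
    ha _ (Icc_add_natCast_subset_Icc_add_succ a k hm), mul_zero, sub_zero]

theorem VanishesOnLargeBoxes.map_pow_shiftSub {F : (σ → ℤ) → K} (h : VanishesOnLargeBoxes F)
    (i : σ) (c : K) (D : ℕ) : VanishesOnLargeBoxes ((shiftSub i c ^ D) F) := by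
  induction D with
  | zero => exact h
  | succ D ih => rw [pow_succ', Module.End.mul_apply]; exact ih.map_shiftSub i c

theorem intCast_comp_add_single (m : σ → ℤ) (i : σ) :
    (Int.cast ∘ (m + Pi.single i 1) : σ → K) = Int.cast ∘ m + Pi.single i 1 := by
  funext k
  rcases eq_or_ne k i with rfl | hk <;> simp [*]

theorem shiftSub_polyExpTerm (i : σ) (c : K) (χ : AddChar (σ → ℤ) K) (q : MvPolynomial σ K) :
    shiftSub i c (polyExpTerm χ q) = polyExpTerm χ (twistedDiff i (χ (Pi.single i 1)) c q) := by
  funext m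
  simp only [shiftSub_apply, polyExpTerm, twistedDiff, AddChar.map_add_eq_mul,
    intCast_comp_add_single, LinearMap.sub_apply, LinearMap.smul_apply, AlgHom.toLinearMap_apply,
    Module.End.one_apply, map_sub, smul_eval, eval_shiftVar]
  ring

theorem pow_shiftSub_polyExpTerm (i : σ) (c : K) (χ : AddChar (σ → ℤ) K)
    (q : MvPolynomial σ K) (D : ℕ) :
    (shiftSub i c ^ D) (polyExpTerm χ q) =
      polyExpTerm χ ((twistedDiff i (χ (Pi.single i 1)) c ^ D) q) := by
  induction D with
  | zero => rfl
  | succ D ih =>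
    rw [pow_succ', pow_succ', Module.End.mul_apply, Module.End.mul_apply, ih,
      shiftSub_polyExpTerm]

end LatticeFunctions

theorem AddChar.eq_of_apply_single_eq {σ M : Type*} [Fintype σ] [DecidableEq σ] [DivisionMonoid M]
    {ψ χ : AddChar (σ → ℤ) M} (h : ∀ i, ψ (Pi.single i 1) = χ (Pi.single i 1)) : ψ = χ := by
  have hsingle : ∀ i (t : ℤ), ψ (Pi.single i t) = χ (Pi.single i t) := fun i t => by
    rw [← mul_one t, ← smul_eq_mul, Pi.single_smul', AddChar.map_zsmul_eq_zpow,
      AddChar.map_zsmul_eq_zpow, h]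
  ext m
  rw [← univ_sum_single m]
  induction (univ : Finset σ) using Finset.induction_on with
  | empty => simp
  | insert i s hi ih =>
    rw [sum_insert hi, AddChar.map_add_eq_mul, AddChar.map_add_eq_mul, ih, hsingle]

theorem eq_zero_of_vanishesOnLargeBoxes_sum_polyExpTerm {σ K ι : Type*} [Fintype σ]
    [DecidableEq σ] [Field K] [CharZero K] [DecidableEq ι]
    {χ : ι → AddChar (σ → ℤ) K} (hχ : Function.Injective χ) (s : Finset ι)
    (p : ι → MvPolynomial σ K) (h : VanishesOnLargeBoxes (∑ j ∈ s, polyExpTerm (χ j) (p j))) :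
    ∀ j ∈ s, p j = 0 := by
  induction s using Finset.induction_on generalizing p with
  | empty => simp
  | insert j₁ s hj₁ ih =>
    have hs : ∀ j ∈ s, p j = 0 := by
      intro j hj
      obtain ⟨i, hi⟩ : ∃ i, χ j (Pi.single i 1) ≠ χ j₁ (Pi.single i 1) := by
        by_contra! hcon
        exact ne_of_mem_of_not_mem hj hj₁ (hχ (AddChar.eq_of_apply_single_eq hcon))
      set z := χ j₁ (Pi.single i 1)
      obtain ⟨D, hD⟩ := exists_pow_twistedDiff_self_apply_eq_zero i z (p j₁)
      have hkill : (shiftSub i z ^ D) (∑ l ∈ insert j₁ s, polyExpTerm (χ l) (p l)) =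
          ∑ l ∈ s, polyExpTerm (χ l) ((twistedDiff i (χ l (Pi.single i 1)) z ^ D) (p l)) := by
        rw [map_sum, sum_insert hj₁, pow_shiftSub_polyExpTerm, hD]
        simp [pow_shiftSub_polyExpTerm]
      have hj_zero := ih _ (hkill ▸ h.map_pow_shiftSub i z D) j hj
      exact ((twistedDiff_injective i hi).iterate D) (by rwa [← Module.End.coe_pow, map_zero])
    have hsum : ∑ l ∈ insert j₁ s, polyExpTerm (χ l) (p l) = polyExpTerm (χ j₁) (p j₁) := by
      rw [sum_insert hj₁, sum_eq_zero fun l hl => by simp [hs l hl], add_zero]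
    intro j hj
    rcases mem_insert.1 hj with rfl | hj
    · exact eq_zero_of_vanishesOnLargeBoxes_polyExpTerm (hsum ▸ h)
    · exact hs j hj

theorem exists_intCast_Icc_subset_of_isOpen_cone {σ : Type*} [Fintype σ] {C : Set (σ → ℝ)}
    (hCopen : IsOpen C) (hCne : C.Nonempty) (hCcone : ∀ x ∈ C, ∀ t : ℝ, 0 < t → t • x ∈ C)
    (k : ℕ) : ∃ a : σ → ℤ, ∀ m ∈ Set.Icc a (a + k), (Int.cast ∘ m : σ → ℝ) ∈ C := by
  obtain ⟨x, hx⟩ := hCne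
  obtain ⟨ε, hε, hball⟩ := Metric.isOpen_iff.1 hCopen x hx
  set t : ℝ := (k + 1) / ε
  have ht : 0 < t := by positivity
  have hbig : Metric.ball (t • x) (k + 1) ⊆ C := by
    rw [show (k + 1 : ℝ) = ‖t‖ * ε by rw [Real.norm_of_nonneg ht.le, div_mul_cancel₀ _ hε.ne'],
      ← smul_ball ht.ne']
    rintro _ ⟨y, hy, rfl⟩
    exact hCcone y (hball hy) t ht
  refine ⟨fun i => ⌈t * x i⌉, fun m hm => hbig ?_⟩
  rw [Metric.mem_ball, dist_pi_lt_iff (by positivity)]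
  intro i
  have h1 : (⌈t * x i⌉ : ℝ) ≤ m i := by exact_mod_cast hm.1 i
  have h2 : (m i : ℝ) ≤ ⌈t * x i⌉ + k := by exact_mod_cast hm.2 i
  have h3 := Int.le_ceil (t * x i)
  have h4 := Int.ceil_lt_add_one (t * x i)
  rw [Real.dist_eq, abs_lt]
  simp only [Function.comp_apply, Pi.smul_apply, smul_eq_mul]
  constructor <;> linarith

noncomputable def latticeChar {σ : Type*} [Fintype σ] (μ : σ → ℝ) : AddChar (σ → ℤ) ℂ where
  toFun m := Complex.exp (Complex.I * ((∑ i, μ i * (m i : ℝ) : ℝ) : ℂ))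
  map_zero_eq_one' := by simp
  map_add_eq_mul' m m' := by
    rw [← Complex.exp_add]
    simp only [Pi.add_apply, Int.cast_add, mul_add, sum_add_distrib]
    push_cast
    ring_nf

theorem latticeChar_single {σ : Type*} [Fintype σ] [DecidableEq σ] (μ : σ → ℝ) (i : σ) :
    latticeChar μ (Pi.single i 1) = Complex.exp (Complex.I * μ i) := by
  simp [latticeChar, Pi.single_apply]

theorem exists_int_of_exp_I_mul_eq {a b : ℝ}
    (h : Complex.exp (Complex.I * a) = Complex.exp (Complex.I * b)) :
    ∃ k : ℤ, a - b = 2 * Real.pi * k := by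
  obtain ⟨k, hk⟩ := Complex.exp_eq_exp_iff_exists_int.1 h
  refine ⟨k, ?_⟩
  have h' : ((a - b : ℝ) : ℂ) = ((2 * Real.pi * k : ℝ) : ℂ) := by
    apply mul_left_cancel₀ Complex.I_ne_zero
    push_cast
    linear_combination hk
  exact_mod_cast h'

theorem stmt3_general {n : ℕ} {N : ℕ}
    (C : Set (Fin n → ℝ)) (hCopen : IsOpen C) (hCne : C.Nonempty)
    (hCcone : ∀ x ∈ C, ∀ t : ℝ, 0 < t → t • x ∈ C)
    (μ : Fin N → (Fin n → ℝ))
    (hμ : ∀ j l, j ≠ l → ¬ ∃ k : Fin n → ℤ, ∀ i, μ j i - μ l i = 2 * Real.pi * k i)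
    (p : Fin N → MvPolynomial (Fin n) ℂ)
    (h : ∀ m : Fin n → ℤ, (fun i => (m i : ℝ)) ∈ C →
      ∑ j, Complex.exp (Complex.I * ((∑ i, μ j i * (m i : ℝ) : ℝ) : ℂ)) *
        MvPolynomial.eval (fun i => ((m i : ℝ) : ℂ)) (p j) = 0) :
    ∀ j, p j = 0 := by
  have hχ : Function.Injective fun j => latticeChar (μ j) := by
    intro j l hjl
    by_contra hne
    refine hμ j l hne ?_
    choose k hk using fun i => exists_int_of_exp_I_mul_eq <| by
      simpa [latticeChar_single] using DFunLike.congr_fun hjl (Pi.single i 1)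
    exact ⟨k, hk⟩
  have hvanish : VanishesOnLargeBoxes (∑ j, polyExpTerm (latticeChar (μ j)) (p j)) := by
    intro k
    obtain ⟨a, ha⟩ := exists_intCast_Icc_subset_of_isOpen_cone hCopen hCne hCcone k
    refine ⟨a, fun m hm => ?_⟩
    simpa [polyExpTerm, latticeChar, Function.comp_def] using h m (ha m hm)
  exact fun j => eq_zero_of_vanishesOnLargeBoxes_sum_polyExpTerm hχ univ p hvanish j (mem_univ j)

/-- uniqueness of polynomial-exponential expansions on the lattice points of
a nonempty open convex cone in `ℝ^n`: if a finite sum `∑ j, exp(i⟨μ j, T⟩) p j (T)` with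
frequencies pairwise distinct modulo `2πℤ^n` vanishes on `ℤ^n ∩ C`, then all polynomial
coefficients vanish. -/
theorem stmt3 {n : ℕ} (hn : 1 ≤ n) {N : ℕ}
    (C : Set (Fin n → ℝ)) (hCopen : IsOpen C) (hCconv : Convex ℝ C) (hCne : C.Nonempty)
    (hCcone : ∀ x ∈ C, ∀ t : ℝ, 0 < t → t • x ∈ C)
    (μ : Fin N → (Fin n → ℝ))
    (hμ : ∀ j l, j ≠ l → ¬ ∃ k : Fin n → ℤ, ∀ i, μ j i - μ l i = 2 * Real.pi * k i)
    (p : Fin N → MvPolynomial (Fin n) ℂ)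
    (h : ∀ m : Fin n → ℤ, (fun i => (m i : ℝ)) ∈ C →
      ∑ j, Complex.exp (Complex.I * ((∑ i, μ j i * (m i : ℝ) : ℝ) : ℂ)) *
        MvPolynomial.eval (fun i => ((m i : ℝ) : ℂ)) (p j) = 0) :
    ∀ j, p j = 0 :=
  stmt3_general C hCopen hCne hCcone μ hμ p h
end

section
/- Let E be a finite-dimensional real inner product space, let w : E → E be a linear isometry, let K ⊆ E be a linear subspace with orthogonal projection p : E → E, and let C_1 ⊆ K and C_2 ⊆ E be closed subsets stable under multiplication by nonnegative real numbers. Assume that ⟨u, v⟩ ≥ 0 for all u ∈ C_1 and v ∈ C_2, and that the only u ∈ C_1 with w(u) = u is u = 0. Then there exists c > 0 such that ‖u‖ + ‖v‖ ≤ c · ‖u − p(w(u)) + v‖ for all u ∈ C_1 and v ∈ C_2. -/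
/-!
The map `f (u, v) = u - p (w u) + v` is linear on `E × E`, so by homogeneity and compactness
of the unit sphere it suffices that `f` vanishes on the closed cone `C₁ × C₂` only at the
origin. If `p (w u) = u + v` with `u ∈ K`, then `⟪w u, u⟫ = ⟪u + v, u⟫ ≥ ‖u‖²`, and for an
isometry this forces `w u = u`; hence `u = 0` and then `v = 0`.
-/

theorem IsCompact.exists_pos_le_norm {X F : Type*} [TopologicalSpace X] [NormedAddCommGroup F]
    {s : Set X} (hs : IsCompact s) {g : X → F} (hg : Continuous g)
    (hg0 : ∀ x ∈ s, g x ≠ 0) : ∃ ε > 0, ∀ x ∈ s, ε ≤ ‖g x‖ := by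
  have h0 : (0 : F) ∉ g '' s := by
    rintro ⟨x, hx, hgx⟩
    exact hg0 x hx hgx
  obtain ⟨ε, hε, hball⟩ :=
    Metric.mem_nhds_iff.1 ((hs.image hg).isClosed.isOpen_compl.mem_nhds h0)
  refine ⟨ε, hε, fun x hx => ?_⟩
  by_contra! hlt
  exact hball (mem_ball_zero_iff.2 hlt) ⟨x, hx, rfl⟩

theorem exists_norm_le_mul_norm_of_isClosed_cone {E F : Type*} [NormedAddCommGroup E]
    [NormedSpace ℝ E] [FiniteDimensional ℝ E] [NormedAddCommGroup F] [NormedSpace ℝ F]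
    (f : E →ₗ[ℝ] F) {C : Set E} (hC : IsClosed C)
    (hcone : ∀ x ∈ C, ∀ t : ℝ, 0 ≤ t → t • x ∈ C) (hf : ∀ x ∈ C, f x = 0 → x = 0) :
    ∃ c > 0, ∀ x ∈ C, ‖x‖ ≤ c * ‖f x‖ := by
  obtain ⟨ε, hε, hεS⟩ := ((isCompact_sphere (0 : E) 1).inter_left hC).exists_pos_le_norm
    f.continuous_of_finiteDimensional fun x hx hfx => by
      simpa [hf x hx.1 hfx] using hx.2
  refine ⟨ε⁻¹, inv_pos.2 hε, fun x hx => ?_⟩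
  rcases eq_or_ne x 0 with rfl | hx0
  · simp
  have hnorm : 0 < ‖x‖ := norm_pos_iff.2 hx0
  have hle : ε ≤ ‖x‖⁻¹ * ‖f x‖ := by
    simpa [norm_smul, hx0] using
      hεS (‖x‖⁻¹ • x) ⟨hcone x hx _ (by positivity), by simp [norm_smul, hx0]⟩
  rw [le_inv_mul_iff₀ hnorm] at hle
  rwa [le_inv_mul_iff₀ hε, mul_comm]

theorem LinearIsometry.apply_eq_self_of_norm_sq_le_inner {E : Type*} [NormedAddCommGroup E]
    [InnerProductSpace ℝ E] (w : E →ₗᵢ[ℝ] E) {u : E} (h : ‖u‖ ^ 2 ≤ inner ℝ (w u) u) :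
    w u = u := by
  have hsq : ‖w u - u‖ ^ 2 ≤ 0 := by
    rw [norm_sub_sq_real, w.norm_map]
    linarith
  rw [← sub_eq_zero, ← norm_eq_zero]
  nlinarith [norm_nonneg (w u - u)]

theorem LinearIsometry.apply_eq_self_of_sub_starProjection_add_eq_zero {E : Type*}
    [NormedAddCommGroup E] [InnerProductSpace ℝ E] (w : E →ₗᵢ[ℝ] E) (K : Submodule ℝ E)
    [K.HasOrthogonalProjection] {u v : E} (hu : u ∈ K) (huv : 0 ≤ inner ℝ u v)
    (h : u - K.starProjection (w u) + v = 0) : w u = u ∧ v = 0 := by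
  have hP : K.starProjection (w u) = u + v := by
    linear_combination (norm := module) -h
  have hwu : w u = u := w.apply_eq_self_of_norm_sq_le_inner <|
    calc ‖u‖ ^ 2 ≤ ‖u‖ ^ 2 + inner ℝ v u := by rw [real_inner_comm]; linarith
      _ = inner ℝ (K.starProjection (w u)) u := by
        rw [hP, inner_add_left, real_inner_self_eq_norm_sq]
      _ = inner ℝ (w u) u := by
        rw [eq_comm, ← sub_eq_zero, ← inner_sub_left, K.starProjection_inner_eq_zero _ _ hu]
  rw [hwu, K.starProjection_eq_self_iff.2 hu, left_eq_add] at hP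
  exact ⟨hwu, hP⟩

/-- quantitative version of claim (2) in the proof of Lemma 3.5 of the
paper. Given closed cones `C₁ ⊆ K` and `C₂` with pairwise nonnegative inner products,
and a linear isometry `w` fixing no nonzero element of `C₁`, one has
`‖u‖ + ‖v‖ ≤ c ‖u - P_K(w u) + v‖` for some `c > 0`. -/
theorem stmt6 {E : Type*} [NormedAddCommGroup E] [InnerProductSpace ℝ E]
    [FiniteDimensional ℝ E]
    (w : E →ₗᵢ[ℝ] E) (K : Submodule ℝ E)
    (C₁ C₂ : Set E) (hC₁K : C₁ ⊆ (K : Set E))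
    (hC₁closed : IsClosed C₁) (hC₂closed : IsClosed C₂)
    (hC₁cone : ∀ u ∈ C₁, ∀ t : ℝ, 0 ≤ t → t • u ∈ C₁)
    (hC₂cone : ∀ v ∈ C₂, ∀ t : ℝ, 0 ≤ t → t • v ∈ C₂)
    (hinner : ∀ u ∈ C₁, ∀ v ∈ C₂, 0 ≤ (inner ℝ u v : ℝ))
    (hfix : ∀ u ∈ C₁, w u = u → u = 0) :
    ∃ c > 0, ∀ u ∈ C₁, ∀ v ∈ C₂,
      ‖u‖ + ‖v‖ ≤ c * ‖u - (K.orthogonalProjection (w u) : E) + v‖ := by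
  let f : E × E →ₗ[ℝ] E := LinearMap.fst ℝ E E
    - K.starProjection.toLinearMap ∘ₗ w.toLinearMap ∘ₗ LinearMap.fst ℝ E E + LinearMap.snd ℝ E E
  have hker : ∀ x ∈ C₁ ×ˢ C₂, f x = 0 → x = 0 := by
    rintro ⟨u, v⟩ ⟨hu, hv⟩ h
    obtain ⟨hwu, rfl⟩ :=
      w.apply_eq_self_of_sub_starProjection_add_eq_zero K (hC₁K hu) (hinner u hu v hv) h
    simp [hfix u hu hwu]
  obtain ⟨c, hc, hle⟩ := exists_norm_le_mul_norm_of_isClosed_cone f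
    (hC₁closed.prod hC₂closed) (fun x hx t ht => ⟨hC₁cone _ hx.1 t ht, hC₂cone _ hx.2 t ht⟩) hker
  refine ⟨2 * c, by positivity, fun u hu v hv => ?_⟩
  calc ‖u‖ + ‖v‖ ≤ 2 * ‖(u, v)‖ := by
        rw [Prod.norm_def]
        linarith [le_max_left ‖u‖ ‖v‖, le_max_right ‖u‖ ‖v‖]
    _ ≤ 2 * (c * ‖f (u, v)‖) := by gcongr; exact hle _ ⟨hu, hv⟩
    _ = _ := by rw [mul_assoc]; rfl
end

section
/- Let E be a finite-dimensional real inner product space and let W, V_1, V_2, U_1, U_2 be linear subspaces of E with W ⊆ V_1, W ⊆ V_2, U_1 ⊆ V_1 and U_2 ⊆ V_2. Equip E × E with the product inner product, let Δ(W) = {(w, w) : w ∈ W} ⊆ E × E, let P_W : E → W denote the orthogonal projection onto W, and for i = 1, 2 let V_i ∩ U_i^⊥ be the orthogonal complement of U_i inside V_i. Then the following are equivalent: (1) V_1 × V_2 is the direct sum of Δ(W) and U_1 × U_2, i.e. Δ(W) ∩ (U_1 × U_2) = {0} and Δ(W) + (U_1 × U_2) = V_1 × V_2; (2) the linear map (V_1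 ∩ U_1^⊥) × (V_2 ∩ U_2^⊥) → W sending (h_1, h_2) to P_W(h_1) + P_W(h_2) is a linear isomorphism. -/
/-!
A vector `w ∈ W` is orthogonal to the image of `(h₁, h₂) ↦ P_W h₁ + P_W h₂` iff it is orthogonal
to both `Vᵢ ⊓ Uᵢᗮ`, i.e. (as `w ∈ Vᵢ`) iff `w ∈ U₁ ⊓ U₂`; so the map is onto `W` exactly when
`Δ(W) ⊓ (U₁ × U₂) = 0`. In that case `Δ(W) ⊔ (U₁ × U₂)` has dimension `dim W + dim U₁ + dim U₂`,
so it fills `V₁ × V₂` iff `dim W = dim (V₁ ⊓ U₁ᗮ) + dim (V₂ ⊓ U₂ᗮ)`, which for a surjective map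
is the same as being bijective.
-/

open Module Submodule
open scoped InnerProductSpace

theorem LinearMap.bijective_iff_surjective_and_finrank_eq {K V V₂ : Type*} [DivisionRing K]
    [AddCommGroup V] [Module K V] [AddCommGroup V₂] [Module K V₂] [FiniteDimensional K V]
    [FiniteDimensional K V₂] (f : V →ₗ[K] V₂) :
    Function.Bijective f ↔ Function.Surjective f ∧ finrank K V = finrank K V₂ :=
  ⟨fun hf => ⟨hf.2, (LinearEquiv.ofBijective f hf).finrank_eq⟩,
    fun ⟨hs, hd⟩ => ⟨(injective_iff_surjective_of_finrank_eq_finrank hd).mpr hs, hs⟩⟩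

namespace Submodule

section Diagonal

variable {R M : Type*} [Semiring R] [AddCommMonoid M] [Module R M]

theorem map_diag_inf_prod (W U₁ U₂ : Submodule R M) :
    W.map ((LinearMap.id : M →ₗ[R] M).prod LinearMap.id) ⊓ U₁.prod U₂ =
      (W ⊓ U₁ ⊓ U₂).map ((LinearMap.id : M →ₗ[R] M).prod LinearMap.id) := by
  ext ⟨x, y⟩
  simp only [mem_inf, mem_map, mem_prod, LinearMap.prod_apply, Function.prod, LinearMap.id_apply,
    Prod.mk.injEq]
  constructor
  · rintro ⟨⟨w, hw, rfl, rfl⟩, hx, hy⟩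
    exact ⟨w, ⟨⟨hw, hx⟩, hy⟩, rfl, rfl⟩
  · rintro ⟨w, ⟨⟨hw, hx⟩, hy⟩, rfl, rfl⟩
    exact ⟨⟨w, hw, rfl, rfl⟩, hx, hy⟩

theorem map_diag_inf_prod_eq_bot_iff (W U₁ U₂ : Submodule R M) :
    W.map ((LinearMap.id : M →ₗ[R] M).prod LinearMap.id) ⊓ U₁.prod U₂ = ⊥ ↔
      W ⊓ U₁ ⊓ U₂ = ⊥ := by
  rw [map_diag_inf_prod, ← map_bot ((LinearMap.id : M →ₗ[R] M).prod LinearMap.id)]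
  exact (map_injective_of_injective fun _ _ h => congrArg Prod.fst h).eq_iff

end Diagonal

section Finrank

variable {K V : Type*} [DivisionRing K] [AddCommGroup V] [Module K V] [FiniteDimensional K V]

theorem finrank_prod (U₁ U₂ : Submodule K V) :
    finrank K (U₁.prod U₂) = finrank K U₁ + finrank K U₂ := by
  rw [← U₁.range_subtype, ← U₂.range_subtype, ← LinearMap.range_prodMap,
    LinearMap.finrank_range_of_inj
      (Prod.map_injective.mpr ⟨U₁.subtype_injective, U₂.subtype_injective⟩),
    Module.finrank_prod, U₁.range_subtype, U₂.range_subtype]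

theorem finrank_map_diag_sup_prod {W U₁ U₂ : Submodule K V}
    (h : W.map ((LinearMap.id : V →ₗ[K] V).prod LinearMap.id) ⊓ U₁.prod U₂ = ⊥) :
    finrank K ↥(W.map ((LinearMap.id : V →ₗ[K] V).prod LinearMap.id) ⊔ U₁.prod U₂) =
      finrank K W + finrank K U₁ + finrank K U₂ := by
  have hsum := finrank_sup_add_finrank_inf_eq
    (W.map ((LinearMap.id : V →ₗ[K] V).prod LinearMap.id)) (U₁.prod U₂)
  rw [h, finrank_bot, add_zero, finrank_prod,
    ← (equivMapOfInjective _ (fun _ _ h => congrArg Prod.fst h) W).finrank_eq] at hsum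
  omega

end Finrank

section Orthogonal

variable {𝕜 E : Type*} [RCLike 𝕜] [NormedAddCommGroup E] [InnerProductSpace 𝕜 E]

theorem inf_orthogonal_inf_orthogonal_eq {U V X : Submodule 𝕜 E} [U.HasOrthogonalProjection]
    (hUV : U ≤ V) (hXV : X ≤ V) : X ⊓ (V ⊓ Uᗮ)ᗮ = X ⊓ U := by
  have hU : U ≤ (V ⊓ Uᗮ)ᗮ := U.le_orthogonal_orthogonal.trans (orthogonal_le inf_le_right)
  have hV : V ⊓ (V ⊓ Uᗮ)ᗮ = U :=
    calc V ⊓ (V ⊓ Uᗮ)ᗮ = (U ⊔ Uᗮ ⊓ V) ⊓ (V ⊓ Uᗮ)ᗮ := by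
          rw [sup_orthogonal_inf_of_hasOrthogonalProjection hUV]
      _ = U ⊔ Uᗮ ⊓ V ⊓ (V ⊓ Uᗮ)ᗮ := sup_inf_assoc_of_le _ hU
      _ = U := by rw [inf_comm Uᗮ, inf_orthogonal_eq_bot, sup_bot_eq]
  conv_rhs => rw [← hV, ← inf_assoc, inf_eq_left.mpr hXV]

variable (W H₁ H₂ : Submodule 𝕜 E) [W.HasOrthogonalProjection]

noncomputable def orthogonalProjectionCoprod : H₁ × H₂ →ₗ[𝕜] W :=
  (W.orthogonalProjectionOnto.toLinearMap ∘ₗ H₁.subtype).coprod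
    (W.orthogonalProjectionOnto.toLinearMap ∘ₗ H₂.subtype)

theorem inner_orthogonalProjectionCoprod (p : H₁ × H₂) (w : W) :
    ⟪orthogonalProjectionCoprod W H₁ H₂ p, w⟫_𝕜 = ⟪(p.1 : E), w⟫_𝕜 + ⟪(p.2 : E), w⟫_𝕜 := by
  simp [orthogonalProjectionCoprod, inner_add_left]

theorem mem_orthogonal_range_orthogonalProjectionCoprod_iff (w : W) :
    w ∈ (LinearMap.range (orthogonalProjectionCoprod W H₁ H₂))ᗮ ↔ (w : E) ∈ H₁ᗮ ⊓ H₂ᗮ := by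
  rw [mem_orthogonal, mem_inf, mem_orthogonal, mem_orthogonal]
  constructor
  · intro h
    refine ⟨fun h₁ hh₁ => ?_, fun h₂ hh₂ => ?_⟩
    · have h0 := h _ (LinearMap.mem_range_self _ (⟨h₁, hh₁⟩, 0))
      rwa [inner_orthogonalProjectionCoprod, ZeroMemClass.coe_zero, inner_zero_left,
        add_zero] at h0
    · have h0 := h _ (LinearMap.mem_range_self _ (0, ⟨h₂, hh₂⟩))
      rwa [inner_orthogonalProjectionCoprod, ZeroMemClass.coe_zero, inner_zero_left,
        zero_add] at h0
  · rintro ⟨h₁, h₂⟩ _ ⟨p, rfl⟩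
    rw [inner_orthogonalProjectionCoprod, h₁ _ p.1.2, h₂ _ p.2.2, add_zero]

theorem range_orthogonalProjectionCoprod_eq_top_iff [FiniteDimensional 𝕜 E] :
    LinearMap.range (orthogonalProjectionCoprod W H₁ H₂) = ⊤ ↔ W ⊓ H₁ᗮ ⊓ H₂ᗮ = ⊥ := by
  rw [← orthogonal_eq_bot_iff, eq_bot_iff, eq_bot_iff, inf_assoc]
  constructor
  · rintro h x ⟨hxW, hx⟩
    simpa using h ((mem_orthogonal_range_orthogonalProjectionCoprod_iff W H₁ H₂ ⟨x, hxW⟩).mpr hx)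
  · intro h w hw
    simpa using h ⟨w.2, (mem_orthogonal_range_orthogonalProjectionCoprod_iff W H₁ H₂ w).mp hw⟩

end Orthogonal

end Submodule

/-- equivalence of conditions (1) and (3) of Section 5.3 of the paper.
For subspaces `W ⊆ V₁, V₂` and `U₁ ⊆ V₁`, `U₂ ⊆ V₂` of a finite-dimensional real inner
product space, `V₁ × V₂` is the direct sum of the diagonal `Δ(W)` and `U₁ × U₂` if and
only if `(h₁, h₂) ↦ P_W h₁ + P_W h₂` is an isomorphism from
`(V₁ ∩ U₁^⊥) × (V₂ ∩ U₂^⊥)` onto `W`. -/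
theorem stmt9 {E : Type*} [NormedAddCommGroup E] [InnerProductSpace ℝ E]
    [FiniteDimensional ℝ E]
    (W V₁ V₂ U₁ U₂ : Submodule ℝ E)
    (hWV₁ : W ≤ V₁) (hWV₂ : W ≤ V₂) (hU₁V₁ : U₁ ≤ V₁) (hU₂V₂ : U₂ ≤ V₂) :
    (W.map ((LinearMap.id : E →ₗ[ℝ] E).prod (LinearMap.id : E →ₗ[ℝ] E)) ⊓ U₁.prod U₂ = ⊥ ∧
      W.map ((LinearMap.id : E →ₗ[ℝ] E).prod (LinearMap.id : E →ₗ[ℝ] E)) ⊔ U₁.prod U₂ =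
        V₁.prod V₂) ↔
    Function.Bijective (fun p : ↥(V₁ ⊓ U₁ᗮ) × ↥(V₂ ⊓ U₂ᗮ) =>
      Submodule.orthogonalProjection W (p.1 : E) + Submodule.orthogonalProjection W (p.2 : E)) := by
  change _ ↔ Function.Bijective (W.orthogonalProjectionCoprod (V₁ ⊓ U₁ᗮ) (V₂ ⊓ U₂ᗮ))
  have hsurj : Function.Surjective (W.orthogonalProjectionCoprod (V₁ ⊓ U₁ᗮ) (V₂ ⊓ U₂ᗮ)) ↔
      W.map ((LinearMap.id : E →ₗ[ℝ] E).prod LinearMap.id) ⊓ U₁.prod U₂ = ⊥ := by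
    rw [← LinearMap.range_eq_top, range_orthogonalProjectionCoprod_eq_top_iff,
      inf_orthogonal_inf_orthogonal_eq hU₁V₁ hWV₁,
      inf_orthogonal_inf_orthogonal_eq hU₂V₂ (inf_le_left.trans hWV₂),
      map_diag_inf_prod_eq_bot_iff]
  rw [LinearMap.bijective_iff_surjective_and_finrank_eq, hsurj, and_congr_right_iff]
  intro hinf
  have hle : W.map ((LinearMap.id : E →ₗ[ℝ] E).prod LinearMap.id) ⊔ U₁.prod U₂ ≤ V₁.prod V₂ :=
    sup_le (by rintro _ ⟨w, hw, rfl⟩; exact ⟨hWV₁ hw, hWV₂ hw⟩) (prod_mono hU₁V₁ hU₂V₂)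
  have hsup := finrank_map_diag_sup_prod hinf
  have hV := finrank_prod V₁ V₂
  have hV₁ := finrank_add_inf_finrank_orthogonal hU₁V₁
  have hV₂ := finrank_add_inf_finrank_orthogonal hU₂V₂
  rw [inf_comm] at hV₁ hV₂
  rw [Module.finrank_prod]
  constructor
  · intro h
    rw [h] at hsup
    omega
  · intro h
    exact eq_of_le_of_finrank_eq hle (by omega)
end
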